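/- Let $\Gamma$ be a star-shaped weighted tree with central vertex of weight $b$ and $k$ linear legs all of whose vertices have weight $\leq -2$, and suppose the legs come in complementary pairs (so $k = 2m$ and legs pair up with $1/cf + 1/cf' = -1$) and $b = -m$. Then the intersection matrix $M_\Gamma$ satisfies $\det M_\Gamma = 0$ and $M_\Gamma$ is negative semidefinite with kernel of rank exactly one. -/

import Mathlib

/-!
Along a leg with weights `a₁, …, aₙ`, put `z₀ = 1` at the centre and
`z_{j+1} = -z_j / [a_{j+1}, …, aₙ]⁻`. Since `[a_j, …, aₙ]⁻ = a_j - 1 / [a_{j+1}, …, aₙ]⁻`,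
these satisfy `z_{j-1} + a_j z_j + z_{j+1} = 0` (with `z_{n+1} = 0`), and all `z_j > 0` because
every tail continued fraction is `< -1`. At the centre the row sum is
`-m + Σ (-1/cf - 1/cf') = -m + m = 0`, so `z` is a positive kernel vector.

For a symmetric matrix `M` with nonnegative off-diagonal entries and a kernel vector `z > 0`,
`xᵀ M x = -½ Σᵢⱼ zᵢ Mᵢⱼ zⱼ (xᵢ/zᵢ - xⱼ/zⱼ)²`. This is `≤ 0`, and it vanishes only if `x / z` is
constant across every edge; the tree is connected, so the kernel is spanned by `z`.
-/

open Matrix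

/-- The negative continued fraction `[a₁,…,aₙ]⁻`, computed in `ℚ`. -/
def ncf : List ℤ → ℚ
  | [] => 0
  | a :: l => (a : ℚ) - 1 / ncf l

/-- The intersection matrix of the star-shaped weighted tree with central
vertex (`none`) of weight `b` and `2m` linear legs indexed by
`Fin m × Bool`; the weights of leg `(i,s)` are the entries of the list
`L i s`, read from the vertex adjacent to the centre outwards. -/
def starPairMat (m : ℕ) (b : ℤ) (L : Fin m → Bool → List ℤ) :
    Matrix (Option ((i : Fin m) × (s : Bool) × Fin (L i s).length))
      (Option ((i : Fin m) × (s : Bool) × Fin (L i s).length)) ℝ :=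
  Matrix.of fun x y =>
    match x, y with
    | none, none => (b : ℝ)
    | none, some ⟨_, _, j⟩ => if (j : ℕ) = 0 then 1 else 0
    | some ⟨_, _, j⟩, none => if (j : ℕ) = 0 then 1 else 0
    | some ⟨i, s, j⟩, some ⟨i', s', j'⟩ =>
        if i = i' ∧ s = s' then
          if (j : ℕ) = (j' : ℕ) then (((L i s).get j : ℤ) : ℝ)
          else if (j : ℕ) + 1 = (j' : ℕ) ∨ (j' : ℕ) + 1 = (j : ℕ) then 1 else 0
        else 0

theorem ncf_lt_neg_one {l : List ℤ} (hne : l ≠ []) (hle : ∀ x ∈ l, x ≤ -2) : ncf l < -1 := by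
  induction l with
  | nil => exact absurd rfl hne
  | cons a t ih =>
    have ha : (a : ℚ) ≤ -2 := by exact_mod_cast hle a List.mem_cons_self
    have hinv : -1 < 1 / ncf t := by
      rcases eq_or_ne t [] with rfl | ht
      · simp [ncf]
      · have ht := ih ht fun x hx => hle x (List.mem_cons_of_mem a hx)
        rw [lt_div_iff_of_neg (by linarith)]
        linarith
    simp only [ncf]
    linarith

theorem sum_range_tridiagonal {n j : ℕ} (hj : j < n) (a : ℝ) (f : ℕ → ℝ) :
    ∑ k ∈ Finset.range n, (if j = k then a else if j + 1 = k ∨ k + 1 = j then 1 else 0) * f k =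
      (if j = 0 then 0 else f (j - 1)) + a * f j + if j + 1 < n then f (j + 1) else 0 := by
  have hsplit : ∀ k, (if j = k then a else if j + 1 = k ∨ k + 1 = j then 1 else 0) * f k =
      (if j - 1 = k ∧ j ≠ 0 then f k else 0) + (if j = k then a * f k else 0) +
        if j + 1 = k then f k else 0 := by
    intro k
    split_ifs <;> first | omega | ring
  simp only [hsplit, Finset.sum_add_distrib, Finset.sum_ite_eq, Finset.mem_range]
  rcases j with _ | p
  · simp [hj]
  · simp [hj, show p < n by omega]

noncomputable def legKernel (l : List ℤ) : ℕ → ℝ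
  | 0 => 1
  | j + 1 => legKernel l j * -(ncf (l.drop j) : ℝ)⁻¹

theorem legKernel_one (l : List ℤ) : legKernel l 1 = -(ncf l : ℝ)⁻¹ := by
  simp [legKernel]

theorem ncf_drop_lt_zero {l : List ℤ} (hle : ∀ x ∈ l, x ≤ -2) {j : ℕ} (hj : j < l.length) :
    (ncf (l.drop j) : ℝ) < 0 := by
  have := ncf_lt_neg_one (l := l.drop j) (by simpa using hj) fun x hx =>
    hle x (List.mem_of_mem_drop hx)
  exact_mod_cast this.trans (by norm_num)

theorem legKernel_pos {l : List ℤ} (hle : ∀ x ∈ l, x ≤ -2) {j : ℕ} (hj : j ≤ l.length) :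
    0 < legKernel l j := by
  induction j with
  | zero => simp [legKernel]
  | succ j ih =>
    have hinv := inv_lt_zero.mpr (ncf_drop_lt_zero hle (j := j) (by omega))
    exact mul_pos (ih (by omega)) (neg_pos.mpr hinv)

-- `ncf [] = 0` and `0⁻¹ = 0`, so the leg vector vanishes one step past the end of the leg and the
-- recurrence below also holds at the last vertex.
theorem legKernel_succ_length (l : List ℤ) : legKernel l (l.length + 1) = 0 := by
  simp [legKernel, ncf]

theorem legKernel_recurrence {l : List ℤ} (hle : ∀ x ∈ l, x ≤ -2) (j : Fin l.length) :
    legKernel l j + (l.get j : ℝ) * legKernel l (j + 1) + legKernel l (j + 2) = 0 := by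
  have hget : (l.get j : ℝ) = ncf (l.drop j) + (ncf (l.drop (j + 1)) : ℝ)⁻¹ := by
    rw [List.drop_eq_getElem_cons j.isLt, ncf]
    push_cast
    simp
  have hcf := mul_inv_cancel₀ (ncf_drop_lt_zero hle j.isLt).ne
  simp only [legKernel, hget]
  linear_combination (-legKernel l j) * hcf

section GroundState

variable {ι : Type*} {M : Matrix ι ι ℝ} {z : ι → ℝ}

theorem dotProduct_mulVec_eq_of_mulVec_eq_zero [Fintype ι] (hM : M.IsSymm)
    (hz : ∀ i, z i ≠ 0) (hMz : M *ᵥ z = 0) (x : ι → ℝ) :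
    x ⬝ᵥ M *ᵥ x = -(1 / 2) * ∑ i, ∑ j, z i * M i j * z j * (x i / z i - x j / z j) ^ 2 := by
  have hrow : ∀ i, ∑ j, M i j * z j = 0 := fun i => congrFun hMz i
  have hcol : ∀ j, ∑ i, z i * M i j = 0 := fun j => by
    simpa only [hM.apply, mul_comm] using hrow j
  have hterm : ∀ i j, z i * M i j * z j * (x i / z i - x j / z j) ^ 2 =
      x i ^ 2 / z i * (M i j * z j) + x j ^ 2 / z j * (z i * M i j) -
        2 * (x i * (M i j * x j)) := by
    intro i j
    field_simp [hz i, hz j]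
    ring
  simp only [hterm, Finset.sum_add_distrib, Finset.sum_sub_distrib, ← Finset.mul_sum]
  rw [Finset.sum_comm (f := fun i j => x j ^ 2 / z j * (z i * M i j))]
  simp only [← Finset.mul_sum, hrow, hcol, mul_zero, Finset.sum_const_zero, dotProduct, mulVec]
  ring

theorem mul_mul_mul_sq_div_sub_div_nonneg (hoff : ∀ i j, i ≠ j → 0 ≤ M i j)
    (hz : ∀ i, 0 < z i) (x : ι → ℝ) (i j : ι) :
    0 ≤ z i * M i j * z j * (x i / z i - x j / z j) ^ 2 := by
  obtain rfl | hij := eq_or_ne i j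
  · simp
  · have := hoff i j hij
    have := hz i
    have := hz j
    positivity

theorem dotProduct_mulVec_nonpos_of_mulVec_eq_zero [Fintype ι] (hM : M.IsSymm)
    (hoff : ∀ i j, i ≠ j → 0 ≤ M i j) (hz : ∀ i, 0 < z i) (hMz : M *ᵥ z = 0)
    (x : ι → ℝ) : x ⬝ᵥ M *ᵥ x ≤ 0 := by
  rw [dotProduct_mulVec_eq_of_mulVec_eq_zero hM (fun i => (hz i).ne') hMz]
  have : 0 ≤ ∑ i, ∑ j, z i * M i j * z j * (x i / z i - x j / z j) ^ 2 :=
    Fintype.sum_nonneg fun i => Fintype.sum_nonneg (mul_mul_mul_sq_div_sub_div_nonneg hoff hz x i)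
  linarith

theorem div_eq_div_of_mulVec_eq_zero [Fintype ι] (hM : M.IsSymm)
    (hoff : ∀ i j, i ≠ j → 0 ≤ M i j) (hz : ∀ i, 0 < z i) (hMz : M *ᵥ z = 0)
    {y : ι → ℝ} (hMy : M *ᵥ y = 0) {i j : ι} (hij : M i j ≠ 0) :
    y i / z i = y j / z j := by
  have hsum : ∑ i, ∑ j, z i * M i j * z j * (y i / z i - y j / z j) ^ 2 = 0 := by
    have := dotProduct_mulVec_eq_of_mulVec_eq_zero hM (fun i => (hz i).ne') hMz y
    rw [hMy, dotProduct_zero] at this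
    linarith
  have hnonneg := mul_mul_mul_sq_div_sub_div_nonneg hoff hz y
  have hrows := (Fintype.sum_eq_zero_iff_of_nonneg fun i => Fintype.sum_nonneg (hnonneg i)).mp hsum
  have hterm := congrFun ((Fintype.sum_eq_zero_iff_of_nonneg (hnonneg i)).mp (congrFun hrows i)) j
  have hcoeff : z i * M i j * z j ≠ 0 := by
    have := (hz i).ne'
    have := (hz j).ne'
    positivity
  have := pow_eq_zero_iff two_ne_zero |>.mp ((mul_eq_zero.mp hterm).resolve_left hcoeff)
  linarith

theorem eq_smul_of_mulVec_eq_zero [Fintype ι] (hM : M.IsSymm)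
    (hoff : ∀ i j, i ≠ j → 0 ≤ M i j) (hz : ∀ i, 0 < z i) (hMz : M *ᵥ z = 0)
    {r : ι} (hconn : ∀ i, Relation.ReflTransGen (fun a b => M a b ≠ 0) r i)
    {y : ι → ℝ} (hMy : M *ᵥ y = 0) : y = (y r / z r) • z := by
  have hratio : ∀ i, y i / z i = y r / z r := fun i => by
    induction hconn i with
    | refl => rfl
    | tail _ hbc ih => rw [← ih, div_eq_div_of_mulVec_eq_zero hM hoff hz hMz hMy hbc]
  funext i
  rw [Pi.smul_apply, smul_eq_mul, ← hratio i, div_mul_cancel₀ _ (hz i).ne']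

end GroundState

abbrev StarVertex (m : ℕ) (L : Fin m → Bool → List ℤ) : Type :=
  Option ((i : Fin m) × (s : Bool) × Fin (L i s).length)

section StarPairMat

variable {m : ℕ} {b : ℤ} {L : Fin m → Bool → List ℤ}

theorem starPairMat_isSymm : (starPairMat m b L).IsSymm := by
  refine Matrix.IsSymm.ext ?_
  rintro (_ | ⟨i, s, j⟩) (_ | ⟨i', s', j'⟩) <;> simp only [starPairMat, Matrix.of_apply]
  by_cases h : i = i' ∧ s = s'
  · obtain ⟨rfl, rfl⟩ := h
    by_cases hj : j = j'
    · subst hj; rfl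
    · simp only [and_self, if_true, Fin.val_eq_val, hj, Ne.symm hj, if_false, or_comm]
  · rw [if_neg h, if_neg fun h' => h ⟨h'.1.symm, h'.2.symm⟩]

theorem starPairMat_nonneg_of_ne : ∀ v w, v ≠ w → 0 ≤ starPairMat m b L v w := by
  rintro (_ | ⟨i, s, j⟩) (_ | ⟨i', s', j'⟩) hvw <;> simp only [starPairMat, Matrix.of_apply]
  · exact absurd rfl hvw
  · split_ifs <;> norm_num
  · split_ifs <;> norm_num
  · by_cases h : i = i' ∧ s = s'
    · obtain ⟨rfl, rfl⟩ := h
      have hj : (j : ℕ) ≠ j' := fun hj => hvw (by rw [Fin.ext hj])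
      simp only [and_self, if_true, if_neg hj]
      split_ifs <;> norm_num
    · simp only [if_neg h, le_refl]

theorem starPairMat_reachable (v : StarVertex m L) :
    Relation.ReflTransGen (fun v w => starPairMat m b L v w ≠ 0) none v := by
  rcases v with _ | ⟨i, s, j, hj⟩
  · rfl
  induction j with
  | zero => exact .single (by simp [starPairMat])
  | succ j ih => exact (ih (by omega)).tail (by simp [starPairMat])

theorem starPairMat_mulVec_none (v : StarVertex m L → ℝ) :
    (starPairMat m b L *ᵥ v) none =
      b * v none +
        ∑ i, ∑ s, ∑ j : Fin (L i s).length, if (j : ℕ) = 0 then v (some ⟨i, s, j⟩) else 0 := by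
  simp only [mulVec, dotProduct, Fintype.sum_option, Fintype.sum_sigma, starPairMat,
    Matrix.of_apply, ite_mul, one_mul, zero_mul]

theorem starPairMat_mulVec_some (v : StarVertex m L → ℝ)
    {i : Fin m} {s : Bool} (f : ℕ → ℝ) (hcentre : v none = f 0)
    (hleg : ∀ j, v (some ⟨i, s, j⟩) = f (j + 1)) (j : Fin (L i s).length) :
    (starPairMat m b L *ᵥ v) (some ⟨i, s, j⟩) =
      f j + (L i s).get j * f (j + 1) + if (j : ℕ) + 1 < (L i s).length then f (j + 2) else 0 := by
  rw [mulVec, dotProduct, Fintype.sum_option, Fintype.sum_sigma, Fintype.sum_eq_single i,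
    Fintype.sum_sigma, Fintype.sum_eq_single s]
  · simp only [starPairMat, Matrix.of_apply, and_self, if_true, hcentre, hleg]
    rw [Fin.sum_univ_eq_sum_range (fun k => (if (j : ℕ) = k then ((L i s).get j : ℝ) else
      if (j : ℕ) + 1 = k ∨ k + 1 = j then 1 else 0) * f (k + 1)), sum_range_tridiagonal j.isLt]
    rcases Nat.eq_zero_or_pos j with hj | hj
    · simp [hj, add_assoc]
    · simp [hj.ne', Nat.sub_add_cancel hj]
  · intro s' hs'
    simp [starPairMat, Ne.symm hs']
  · intro i' hi'
    simp [starPairMat, Ne.symm hi']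

end StarPairMat

noncomputable def starKernelVec (m : ℕ) (L : Fin m → Bool → List ℤ) :
    StarVertex m L → ℝ
  | none => 1
  | some ⟨i, s, j⟩ => legKernel (L i s) (j + 1)

section Kernel

variable {m : ℕ} {L : Fin m → Bool → List ℤ}

theorem starKernelVec_pos (hle : ∀ i s, ∀ x ∈ L i s, x ≤ -2) (v : StarVertex m L) :
    0 < starKernelVec m L v := by
  rcases v with _ | ⟨i, s, j⟩
  · exact one_pos
  · exact legKernel_pos (hle i s) j.isLt

theorem starPairMat_mulVec_starKernelVec (hne : ∀ i s, L i s ≠ [])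
    (hle : ∀ i s, ∀ x ∈ L i s, x ≤ -2)
    (hcomp : ∀ i, 1 / ncf (L i false) + 1 / ncf (L i true) = -1) :
    starPairMat m (-(m : ℤ)) L *ᵥ starKernelVec m L = 0 := by
  funext v
  rcases v with _ | ⟨i, s, j⟩
  · have hfirst : ∀ i s, ∑ j : Fin (L i s).length,
        (if (j : ℕ) = 0 then legKernel (L i s) (j + 1) else 0) = legKernel (L i s) 1 := by
      intro i s
      rw [Fin.sum_univ_eq_sum_range (fun k => if k = 0 then legKernel (L i s) (k + 1) else 0),
        Finset.sum_ite_eq', if_pos (Finset.mem_range.mpr (List.length_pos_iff.mpr (hne i s)))]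
    have hpair : ∀ i, ∑ s, legKernel (L i s) 1 = 1 := by
      intro i
      have h : ((ncf (L i false) : ℝ)⁻¹ + (ncf (L i true) : ℝ)⁻¹) = -1 := by
        have := hcomp i
        rw [one_div, one_div] at this
        exact_mod_cast this
      rw [Fintype.sum_bool, legKernel_one, legKernel_one]
      linarith
    rw [Pi.zero_apply, starPairMat_mulVec_none]
    simp only [starKernelVec, hfirst, hpair]
    simp
  · rw [Pi.zero_apply, starPairMat_mulVec_some _ (legKernel (L i s)) rfl fun _ => rfl]
    split_ifs with hj
    · exact legKernel_recurrence (hle i s) j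
    · have h := legKernel_recurrence (hle i s) j
      rwa [show (j : ℕ) + 2 = (L i s).length + 1 by omega, legKernel_succ_length] at h

end Kernel

/-- let `Γ` be a star-shaped weighted tree whose central vertex
has weight `b = -m` and whose `k = 2m` linear legs have all weights `≤ -2` and
come in complementary pairs (`1/cf + 1/cf' = -1`).  Then the intersection
matrix `M_Γ` has determinant `0`, is negative semidefinite, and its kernel has
rank exactly one. -/
theorem stmt_19 (m : ℕ) (L : Fin m → Bool → List ℤ)
    (hne : ∀ i s, L i s ≠ [])
    (hle : ∀ i s, ∀ x ∈ L i s, x ≤ -2)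
    (hcomp : ∀ i, 1 / ncf (L i false) + 1 / ncf (L i true) = -1) :
    (starPairMat m (-(m : ℤ)) L).det = 0 ∧
    (∀ x, x ⬝ᵥ (starPairMat m (-(m : ℤ)) L).mulVec x ≤ 0) ∧
    (∃ z, z ≠ 0 ∧ (starPairMat m (-(m : ℤ)) L).mulVec z = 0 ∧
      ∀ y, (starPairMat m (-(m : ℤ)) L).mulVec y = 0 → ∃ c : ℝ, y = c • z) := by
  have hpos := starKernelVec_pos hle
  have hker := starPairMat_mulVec_starKernelVec hne hle hcomp
  have hne_zero : starKernelVec m L ≠ 0 := fun h => (hpos none).ne' (congrFun h none)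
  refine ⟨exists_mulVec_eq_zero_iff.mp ⟨_, hne_zero, hker⟩,
    dotProduct_mulVec_nonpos_of_mulVec_eq_zero starPairMat_isSymm starPairMat_nonneg_of_ne hpos
      hker,
    _, hne_zero, hker, fun y hy => ⟨_, eq_smul_of_mulVec_eq_zero starPairMat_isSymm
      starPairMat_nonneg_of_ne hpos hker starPairMat_reachable hy⟩⟩
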